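/- Let C be a UCQ rewritable class of sets of tgds, Σ ∈ C a finite set of tgds, and q a conjunctive query. If q is semantically acyclic under Σ, then there exists an acyclic conjunctive query q' with at most 2·f_C(q,Σ) atoms such that q ≡_Σ q'. -/

import Mathlib

namespace SemAcPaper

/-! ## Terms, atoms, instances -/

/-- Terms: constants, labeled nulls and variables, each indexed by a natural number. -/
inductive Tm where
  | const : ℕ → Tm
  | null  : ℕ → Tm
  | var   : ℕ → Tm
deriving DecidableEq

def Tm.isVar : Tm → Prop
  | .var _ => True
  | _ => False

def Tm.isNull : Tm → Prop
  | .null _ => True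
  | _ => False

def Tm.isConst : Tm → Prop
  | .const _ => True
  | _ => False

/-- A relational atom: a relation symbol (a relation symbol is identified by a natural
number together with its arity, i.e. the length of the argument list) applied to a
list of terms. -/
structure Atom where
  rel : ℕ
  args : List Tm
deriving DecidableEq

def Atom.map (f : Tm → Tm) (a : Atom) : Atom := ⟨a.rel, a.args.map f⟩

/-- An instance is a (possibly infinite) set of atoms. -/
abbrev Inst := Set Atom

/-- A proper instance mentions only constants and nulls (no variables). -/
def IsInstance (I : Inst) : Prop := ∀ a ∈ I, ∀ t ∈ a.args, ¬ t.isVar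

/-- An instance is acyclic if it is empty or admits a join tree: a tree `T` together
with a labeling of its nodes by atoms of the instance such that every atom of the
instance labels some node, and for each term the set of nodes whose label mentions
that term induces a connected subgraph of `T`. -/
def AcyclicInst (I : Inst) : Prop :=
  I = ∅ ∨
  ∃ (V : Type) (T : SimpleGraph V) (lab : V → Atom),
    T.IsTree ∧
    (∀ v, lab v ∈ I) ∧
    (∀ a ∈ I, ∃ v, lab v = a) ∧
    (∀ t : Tm, (T.induce {v | t ∈ (lab v).args}).Preconnected)

/-! ## Conjunctive queries -/

/-- A conjunctive query: a tuple of free variables together with a finite set of atoms. -/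
structure CQ where
  free : List ℕ
  atoms : Finset Atom
deriving DecidableEq

/-- Variables occurring in a finite set of atoms. -/
def varsOf (s : Finset Atom) : Set ℕ := {v | ∃ a ∈ s, Tm.var v ∈ a.args}

/-- Well-formedness of a CQ: the free variables are pairwise distinct and occur in the
atoms, and the atoms mention no nulls (only variables and constants). -/
def CQ.wf (q : CQ) : Prop :=
  q.free.Nodup ∧ (∀ x ∈ q.free, x ∈ varsOf q.atoms) ∧
    ∀ a ∈ q.atoms, ∀ t ∈ a.args, ¬ t.isNull

/-- Extend an assignment of variables to a map on terms (identity on constants/nulls). -/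
def assign (h : ℕ → Tm) : Tm → Tm
  | .var v => h v
  | t => t

/-- `h` is a homomorphism from the query `q` into the instance `I`:
it assigns constants/nulls to variables and sends every atom of `q` into `I`. -/
def CQ.homOf (q : CQ) (h : ℕ → Tm) (I : Inst) : Prop :=
  (∀ v, ¬ (h v).isVar) ∧ ∀ a ∈ q.atoms, a.map (assign h) ∈ I

/-- Evaluation of a CQ over an instance. -/
def CQ.eval (q : CQ) (I : Inst) : Set (List Tm) :=
  {t | ∃ h : ℕ → Tm, q.homOf h I ∧ t = q.free.map h}

/-- Variables viewed as (labeled) nulls. -/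
def varToNull : Tm → Tm
  | .var v => .null v
  | t => t

/-- The instance formed by the atoms of a CQ, variables viewed as nulls
(this is also the canonical database of `q`, its variables frozen). -/
def CQ.inst (q : CQ) : Inst := (fun a : Atom => a.map varToNull) '' (↑q.atoms : Set Atom)

/-- A CQ is acyclic if the instance formed by its atoms is acyclic. -/
def CQ.Acyclic (q : CQ) : Prop := AcyclicInst q.inst

/-- The Gaifman graph of a set of atoms: vertices are variables, two distinct
variables are adjacent iff they occur together in some atom. -/
def gaifman (s : Finset Atom) : SimpleGraph ℕ :=
  SimpleGraph.fromRel (fun x y => ∃ a ∈ s, Tm.var x ∈ a.args ∧ Tm.var y ∈ a.args)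

/-- A set of atoms is connected if its Gaifman graph (on the variables occurring
in it) is connected. -/
def ConnectedAtoms (s : Finset Atom) : Prop :=
  ((gaifman s).induce (varsOf s)).Preconnected

def CQ.Connected (q : CQ) : Prop := ConnectedAtoms q.atoms

/-! ## Tuple-generating dependencies -/

/-- A tgd `∀x̄∀ȳ(φ(x̄,ȳ) → ∃z̄ ψ(x̄,z̄))`, represented by its body `φ` and head `ψ`;
the existentially quantified variables are those head variables not occurring
in the body. -/
structure TGD where
  body : Finset Atom
  head : Finset Atom
deriving DecidableEq

def TGD.wf (τ : TGD) : Prop :=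
  τ.body.Nonempty ∧ τ.head.Nonempty ∧
    ∀ a ∈ τ.body ∪ τ.head, ∀ t ∈ a.args, ¬ t.isNull

/-- Satisfaction of a tgd by an instance. -/
def TGD.holds (τ : TGD) (I : Inst) : Prop :=
  ∀ h : ℕ → Tm, (∀ v, ¬ (h v).isVar) → (∀ a ∈ τ.body, a.map (assign h) ∈ I) →
    ∃ h' : ℕ → Tm, (∀ v, ¬ (h' v).isVar) ∧ (∀ v ∈ varsOf τ.body, h' v = h v) ∧
      ∀ a ∈ τ.head, a.map (assign h') ∈ I

def SatTGDs (I : Inst) (S : Finset TGD) : Prop := ∀ τ ∈ S, τ.holds I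

/-- Containment of CQs under a finite set of tgds: `q ⊆_Σ q'`. -/
def ContUnder (S : Finset TGD) (q q' : CQ) : Prop :=
  ∀ I : Inst, IsInstance I → SatTGDs I S → q.eval I ⊆ q'.eval I

/-- Equivalence of CQs under a finite set of tgds: `q ≡_Σ q'`. -/
def EquivUnder (S : Finset TGD) (q q' : CQ) : Prop :=
  ContUnder S q q' ∧ ContUnder S q' q

/-- A CQ is semantically acyclic under `S` if it is equivalent under `S`
to an acyclic CQ (with a free-variable tuple of the same length). -/
def SemAcyclic (S : Finset TGD) (q : CQ) : Prop :=
  ∃ q' : CQ, q'.wf ∧ q'.Acyclic ∧ q'.free.length = q.free.length ∧ EquivUnder S q q'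

def TGD.BodyConnected (τ : TGD) : Prop := ConnectedAtoms τ.body

/-! ## Classes of tgds -/

/-- A tgd is guarded if some body atom contains all body variables. -/
def TGD.Guarded (τ : TGD) : Prop :=
  ∃ g ∈ τ.body, ∀ v ∈ varsOf τ.body, Tm.var v ∈ g.args

def GuardedClass : Set (Finset TGD) := {S | ∀ τ ∈ S, τ.Guarded}

/-- A tgd is full if it has no existentially quantified head variables. -/
def TGD.Full (τ : TGD) : Prop := varsOf τ.head ⊆ varsOf τ.body

def FullClass : Set (Finset TGD) := {S | ∀ τ ∈ S, τ.Full}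

/-- A tgd is linear if its body consists of a single atom. -/
def TGD.Linear (τ : TGD) : Prop := τ.body.card = 1

def Atom.varList (a : Atom) : List ℕ :=
  a.args.filterMap (fun t => match t with | Tm.var v => some v | _ => none)

/-- An inclusion dependency: a linear tgd with a single head atom and no repeated
variables in the body nor in the head. -/
def TGD.InclusionDep (τ : TGD) : Prop :=
  τ.body.card = 1 ∧ τ.head.card = 1 ∧
    (∀ a ∈ τ.body, a.varList.Nodup) ∧ ∀ a ∈ τ.head, a.varList.Nodup

def LinearClass : Set (Finset TGD) := {S | ∀ τ ∈ S, τ.Linear}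
def IDClass : Set (Finset TGD) := {S | ∀ τ ∈ S, τ.InclusionDep}

/-- Edge of the predicate graph of a set of tgds (predicates are pairs of a
relation name and an arity). -/
def pgEdge (S : Finset TGD) (P Q : ℕ × ℕ) : Prop :=
  ∃ τ ∈ S, (∃ a ∈ τ.body, (a.rel, a.args.length) = P) ∧
    ∃ a ∈ τ.head, (a.rel, a.args.length) = Q

/-- A set of tgds is non-recursive if its predicate graph has no directed cycle. -/
def NonRecursive (S : Finset TGD) : Prop := ∀ P, ¬ Relation.TransGen (pgEdge S) P P

def NRClass : Set (Finset TGD) := {S | NonRecursive S}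

/-- The marking procedure underlying stickiness: a body variable of a tgd of `S` is
marked if it does not occur in every head atom of that tgd (base step); markings are
propagated from heads to bodies: a variable occurring in the body of a tgd at a
position at which a marked variable occurs in the head of some tgd is marked. -/
inductive Marked (S : Finset TGD) : TGD → ℕ → Prop where
  | base (τ : TGD) (v : ℕ) : τ ∈ S → v ∈ varsOf τ.body →
      (∃ a ∈ τ.head, Tm.var v ∉ a.args) → Marked S τ v
  | prop (τ τ' : TGD) (v v' : ℕ) (R n i : ℕ) : τ ∈ S → τ' ∈ S →
      (∃ a ∈ τ.body, a.rel = R ∧ a.args.length = n ∧ a.args[i]? = some (Tm.var v)) →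
      Marked S τ' v' →
      (∃ a ∈ τ'.head, a.rel = R ∧ a.args.length = n ∧ a.args[i]? = some (Tm.var v')) →
      Marked S τ v

/-- A set of tgds is sticky if no tgd contains two occurrences of a marked variable. -/
def Sticky (S : Finset TGD) : Prop :=
  ∀ τ ∈ S, ∀ v : ℕ, Marked S τ v →
    (τ.body.sum fun a => a.args.count (Tm.var v)) ≤ 1

def StickyClass : Set (Finset TGD) := {S | Sticky S}

/-! ## The chase for tgds -/

def nullsOf (I : Inst) : Set ℕ := {n | ∃ a ∈ I, Tm.null n ∈ a.args}

/-- The existential variables of a tgd. -/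
def TGD.exVars (τ : TGD) : Set ℕ := varsOf τ.head \ varsOf τ.body

/-- A single chase step: a trigger `h` for the body of `τ` in `I` is extended to `h'`
mapping each existential variable to a fresh distinct null, and the corresponding
head atoms are added. -/
def ChaseStep (τ : TGD) (I J : Inst) : Prop :=
  ∃ h h' : ℕ → Tm,
    (∀ v, ¬ (h v).isVar) ∧
    (∀ a ∈ τ.body, a.map (assign h) ∈ I) ∧
    (∀ v, ¬ (h' v).isVar) ∧
    (∀ v ∈ varsOf τ.body, h' v = h v) ∧
    (∀ v ∈ τ.exVars, ∃ m, h' v = Tm.null m ∧ m ∉ nullsOf I) ∧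
    (∀ v ∈ τ.exVars, ∀ w ∈ τ.exVars, h' v = h' w → v = w) ∧
    J = I ∪ (fun a : Atom => a.map (assign h')) '' (↑τ.head : Set Atom)

/-- A chase sequence for a CQ `q` under a finite set `S` of tgds: it starts from the
canonical instance of `q`, each step either applies a tgd of `S` or leaves the
instance unchanged, and the union of the sequence satisfies `S`. -/
structure ChaseSeq (S : Finset TGD) (q : CQ) where
  seq : ℕ → Inst
  init : seq 0 = q.inst
  step : ∀ i, seq (i + 1) = seq i ∨ ∃ τ ∈ S, ChaseStep τ (seq i) (seq (i + 1))
  sat : SatTGDs (⋃ i, seq i) S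

/-- The result of a chase sequence. -/
def ChaseSeq.result {S : Finset TGD} {q : CQ} (c : ChaseSeq S q) : Inst := ⋃ i, c.seq i

/-- A class of sets of tgds has acyclicity-preserving chase if for every acyclic CQ,
every set of the class and every chase sequence, the result of the chase sequence
is an acyclic instance. -/
def APChase (C : Set (Finset TGD)) : Prop :=
  ∀ q : CQ, q.wf → q.Acyclic → ∀ S ∈ C, ∀ c : ChaseSeq S q, AcyclicInst c.result

/-! ## Equality-generating dependencies -/

/-- An egd `∀x̄(φ(x̄) → x_i = x_j)`. -/
structure EGD where
  body : Finset Atom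
  lhs : ℕ
  rhs : ℕ
deriving DecidableEq

def EGD.wf (ε : EGD) : Prop :=
  (∀ a ∈ ε.body, ∀ t ∈ a.args, ¬ t.isNull) ∧
    ε.lhs ∈ varsOf ε.body ∧ ε.rhs ∈ varsOf ε.body

def EGD.holds (ε : EGD) (I : Inst) : Prop :=
  ∀ h : ℕ → Tm, (∀ v, ¬ (h v).isVar) → (∀ a ∈ ε.body, a.map (assign h) ∈ I) →
    h ε.lhs = h ε.rhs

def SatEGDs (I : Inst) (S : Finset EGD) : Prop := ∀ ε ∈ S, ε.holds I

def ContUnderE (S : Finset EGD) (q q' : CQ) : Prop :=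
  ∀ I : Inst, IsInstance I → SatEGDs I S → q.eval I ⊆ q'.eval I

def EquivUnderE (S : Finset EGD) (q q' : CQ) : Prop :=
  ContUnderE S q q' ∧ ContUnderE S q' q

def SemAcyclicE (S : Finset EGD) (q : CQ) : Prop :=
  ∃ q' : CQ, q'.wf ∧ q'.Acyclic ∧ q'.free.length = q.free.length ∧ EquivUnderE S q q'

/-- Substitute the term `t` by `t'`. -/
def substTm (t t' : Tm) : Tm → Tm := fun s => if s = t then t' else s

/-- A single egd chase step: an applicable egd identifies the two (distinct) terms,
replacing a null by the other term everywhere. -/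
def EGDChaseStep (ε : EGD) (I J : Inst) : Prop :=
  ∃ h : ℕ → Tm,
    (∀ v, ¬ (h v).isVar) ∧ (∀ a ∈ ε.body, a.map (assign h) ∈ I) ∧
    h ε.lhs ≠ h ε.rhs ∧
    (((h ε.lhs).isNull ∧ J = (fun a => a.map (substTm (h ε.lhs) (h ε.rhs))) '' I) ∨
     ((h ε.rhs).isNull ∧ J = (fun a => a.map (substTm (h ε.rhs) (h ε.lhs))) '' I))

/-- `J` is the result of a chase sequence for `q` under the egds `S`: it is obtained
from the canonical instance of `q` (variables treated as nulls) by finitely many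
egd chase steps and satisfies `S`. -/
def EGDChaseResult (S : Finset EGD) (q : CQ) (J : Inst) : Prop :=
  Relation.ReflTransGen (fun I₁ I₂ => ∃ ε ∈ S, EGDChaseStep ε I₁ I₂) q.inst J ∧
    SatEGDs J S

/-- Acyclicity-preserving chase for classes of sets of egds. -/
def APChaseE (C : Set (Finset EGD)) : Prop :=
  ∀ q : CQ, q.wf → q.Acyclic → ∀ S ∈ C, ∀ J, EGDChaseResult S q J → AcyclicInst J

/-- `ε` is a key dependency over an `n`-ary predicate: its body consists of two
atoms over the same predicate agreeing (sharing a variable) exactly on the key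
positions `A`, all other variables being pairwise distinct, and it equates the
variables at the unique non-key position `j`. -/
def EGD.IsKey (ε : EGD) (n : ℕ) : Prop :=
  ∃ (R : ℕ) (A : Finset (Fin n)) (x y : Fin n → ℕ) (j : Fin n),
    Function.Injective x ∧ Function.Injective y ∧
    (∀ i i', x i = y i' ↔ (i = i' ∧ i ∈ A)) ∧
    j ∉ A ∧ insert j A = Finset.univ ∧
    ε.body = {⟨R, List.ofFn (fun i => Tm.var (x i))⟩, ⟨R, List.ofFn (fun i => Tm.var (y i))⟩} ∧
    ε.lhs = x j ∧ ε.rhs = y j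

/-- The class of finite sets of keys over unary and binary predicates. -/
def K2Class : Set (Finset EGD) := {S | ∀ ε ∈ S, ε.IsKey 1 ∨ ε.IsKey 2}

/-! ## Encodings -/

def tmEquiv : Tm ≃ (ℕ ⊕ ℕ ⊕ ℕ) where
  toFun t := match t with
    | .const n => Sum.inl n
    | .null n => Sum.inr (Sum.inl n)
    | .var n => Sum.inr (Sum.inr n)
  invFun s := match s with
    | Sum.inl n => .const n
    | Sum.inr (Sum.inl n) => .null n
    | Sum.inr (Sum.inr n) => .var n
  left_inv t := by cases t <;> rfl
  right_inv s := by rcases s with _ | (_ | _) <;> rfl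

instance : Encodable Tm := Encodable.ofEquiv _ tmEquiv

def atomEquiv : Atom ≃ ℕ × List Tm where
  toFun a := (a.rel, a.args)
  invFun p := ⟨p.1, p.2⟩
  left_inv _ := rfl
  right_inv _ := rfl

instance : Encodable Atom := Encodable.ofEquiv _ atomEquiv

def cqEquiv : CQ ≃ List ℕ × Finset Atom where
  toFun q := (q.free, q.atoms)
  invFun p := ⟨p.1, p.2⟩
  left_inv _ := rfl
  right_inv _ := rfl

instance : Encodable CQ := Encodable.ofEquiv _ cqEquiv

def tgdEquiv : TGD ≃ Finset Atom × Finset Atom where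
  toFun τ := (τ.body, τ.head)
  invFun p := ⟨p.1, p.2⟩
  left_inv _ := rfl
  right_inv _ := rfl

instance : Encodable TGD := Encodable.ofEquiv _ tgdEquiv

def egdEquiv : EGD ≃ Finset Atom × ℕ × ℕ where
  toFun ε := (ε.body, ε.lhs, ε.rhs)
  invFun p := ⟨p.1, p.2.1, p.2.2⟩
  left_inv _ := rfl
  right_inv _ := rfl

instance : Encodable EGD := Encodable.ofEquiv _ egdEquiv

/-- The canonical encoding of an input as a binary string. -/
def encLB {α : Type} [Encodable α] (a : α) : List Bool := (Encodable.encode a).bits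

end SemAcPaper
namespace SemAcPaper

/-! ## A Turing machine model and complexity classes

Deterministic single-tape Turing machines over the tape alphabet `Option Bool`
(`none` is the blank symbol), with a finite set of states `{0, …, states - 1}`.
The machine halts when the transition function returns `none`; it accepts iff it
halts with the symbol `some true` under its head. -/

inductive Move where
  | left | right | stay
deriving DecidableEq

def Move.offset : Move → ℤ
  | .left => -1
  | .right => 1
  | .stay => 0

structure TM where
  states : ℕ
  start : ℕ
  start_lt : start < states
  trans : ℕ → Option Bool → Option (ℕ × Option Bool × Move)
  trans_lt : ∀ p s r w m, trans p s = some (r, w, m) → r < states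

structure Cfg where
  state : ℕ
  head : ℤ
  tape : ℤ → Option Bool

/-- The initial configuration on input `x`: the input is written in cells
`0, …, x.length - 1`, all other cells are blank, head on cell `0`. -/
def TM.initCfg (M : TM) (x : List Bool) : Cfg :=
  ⟨M.start, 0, fun i => if 0 ≤ i ∧ i.toNat < x.length then some (x.getD i.toNat false) else none⟩

def TM.stepCfg (M : TM) (c : Cfg) : Option Cfg :=
  match M.trans c.state (c.tape c.head) with
  | none => none
  | some (r, w, m) => some ⟨r, c.head + m.offset, Function.update c.tape c.head w⟩

/-- `n` steps of the machine (staying put once halted). -/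
def TM.stepN (M : TM) : ℕ → Cfg → Cfg
  | 0, c => c
  | n + 1, c =>
    match M.stepCfg c with
    | none => c
    | some c' => M.stepN n c'

def TM.halted (M : TM) (c : Cfg) : Prop := M.stepCfg c = none

def Cfg.accepts (c : Cfg) : Prop := c.tape c.head = some true

/-- `M` decides the language `L` within time `T` (as a function of the input length). -/
def TM.DecidesInTime (M : TM) (L : Set (List Bool)) (T : ℕ → ℕ) : Prop :=
  ∀ x : List Bool, ∃ n ≤ T x.length,
    M.halted (M.stepN n (M.initCfg x)) ∧ ((M.stepN n (M.initCfg x)).accepts ↔ x ∈ L)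

/-- `M` decides the language `L` within space `Sp`: it halts with the correct answer
having visited only cells at distance at most `Sp` of the input length from the origin. -/
def TM.DecidesInSpace (M : TM) (L : Set (List Bool)) (Sp : ℕ → ℕ) : Prop :=
  ∀ x : List Bool, ∃ n,
    M.halted (M.stepN n (M.initCfg x)) ∧ ((M.stepN n (M.initCfg x)).accepts ↔ x ∈ L) ∧
    ∀ m ≤ n, ((M.stepN m (M.initCfg x)).head).natAbs ≤ Sp x.length

def InTIME (T : ℕ → ℕ) (L : Set (List Bool)) : Prop := ∃ M : TM, M.DecidesInTime L T

def InSPACE (Sp : ℕ → ℕ) (L : Set (List Bool)) : Prop := ∃ M : TM, M.DecidesInSpace L Sp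

/-- Deterministic polynomial time. -/
def Pclass : Set (Set (List Bool)) := {L | ∃ k, InTIME (fun n => (n + 2) ^ k) L}

/-- Deterministic exponential time. -/
def EXPclass : Set (Set (List Bool)) := {L | ∃ k, InTIME (fun n => 2 ^ ((n + 2) ^ k)) L}

/-- Deterministic double exponential time. -/
def TwoEXPclass : Set (Set (List Bool)) := {L | ∃ k, InTIME (fun n => 2 ^ 2 ^ ((n + 2) ^ k)) L}

/-- Polynomial space. -/
def PSPACEclass : Set (Set (List Bool)) := {L | ∃ k, InSPACE (fun n => (n + 2) ^ k) L}

/-- An injective pairing of binary strings. -/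
def pairLB (x y : List Bool) : List Bool := (x.flatMap fun b => [b, b]) ++ [true, false] ++ y

/-- `NP` via polynomial-time verifiers and polynomial-length certificates. -/
def NPclass : Set (Set (List Bool)) :=
  {L | ∃ (k : ℕ) (V : Set (List Bool)), V ∈ Pclass ∧
        ∀ x, x ∈ L ↔ ∃ y : List Bool, y.length ≤ (x.length + 2) ^ k ∧ pairLB x y ∈ V}

/-- `NEXPTIME` via polynomial-time verifiers and exponential-length certificates. -/
def NEXPclass : Set (Set (List Bool)) :=
  {L | ∃ (k : ℕ) (V : Set (List Bool)), V ∈ Pclass ∧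
        ∀ x, x ∈ L ↔ ∃ y : List Bool, y.length ≤ 2 ^ ((x.length + 2) ^ k) ∧ pairLB x y ∈ V}

/-- `M` computes the function `f` within time `T`: it halts with exactly `f x`
written in the cells `0, …` of the tape. -/
def TM.ComputesInTime (M : TM) (f : List Bool → List Bool) (T : ℕ → ℕ) : Prop :=
  ∀ x, ∃ n ≤ T x.length,
    M.halted (M.stepN n (M.initCfg x)) ∧
    (M.stepN n (M.initCfg x)).tape =
      (fun i => if 0 ≤ i ∧ i.toNat < (f x).length then some ((f x).getD i.toNat false) else none)

def PolyTimeComputable (f : List Bool → List Bool) : Prop :=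
  ∃ (k : ℕ) (M : TM), M.ComputesInTime f (fun n => (n + 2) ^ k)

/-- Polynomial-time many-one reducibility. -/
def PolyReducible (L₁ L₂ : Set (List Bool)) : Prop :=
  ∃ f, PolyTimeComputable f ∧ ∀ x, x ∈ L₁ ↔ f x ∈ L₂

/-- `L` is hard for the complexity class `Cl` under polynomial-time reductions. -/
def HardFor (Cl : Set (Set (List Bool))) (L : Set (List Bool)) : Prop :=
  ∀ L' ∈ Cl, PolyReducible L' L

/-- `L` is complete for the complexity class `Cl` under polynomial-time reductions. -/
def CompleteFor (Cl : Set (Set (List Bool))) (L : Set (List Bool)) : Prop :=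
  L ∈ Cl ∧ HardFor Cl L

end SemAcPaper
namespace SemAcPaper

/-! ## Decision problems as languages of binary strings -/

/-- The language of the problem `SemAc(C)`: encodings of pairs of a well-formed CQ `q`
and a finite set `S ∈ C` of well-formed tgds such that `q` is semantically acyclic
under `S`. -/
def L_SemAc (C : Set (Finset TGD)) : Set (List Bool) :=
  {w | ∃ (q : CQ) (S : Finset TGD), q.wf ∧ (∀ τ ∈ S, τ.wf) ∧ S ∈ C ∧
        w = encLB (q, S) ∧ SemAcyclic S q}

def CQ.arityLE (q : CQ) (r : ℕ) : Prop := ∀ a ∈ q.atoms, a.args.length ≤ r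
def TGD.arityLE (τ : TGD) (r : ℕ) : Prop := ∀ a ∈ τ.body ∪ τ.head, a.args.length ≤ r
def EGD.arityLE (ε : EGD) (r : ℕ) : Prop := ∀ a ∈ ε.body, a.args.length ≤ r

/-- `SemAc(C)` restricted to schemas whose arity is bounded by the fixed `r`. -/
def L_SemAcAr (C : Set (Finset TGD)) (r : ℕ) : Set (List Bool) :=
  {w | ∃ (q : CQ) (S : Finset TGD), q.wf ∧ (∀ τ ∈ S, τ.wf) ∧ S ∈ C ∧
        q.arityLE r ∧ (∀ τ ∈ S, τ.arityLE r) ∧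
        w = encLB (q, S) ∧ SemAcyclic S q}

def CQ.overSchema (q : CQ) (sch : Finset (ℕ × ℕ)) : Prop :=
  ∀ a ∈ q.atoms, (a.rel, a.args.length) ∈ sch
def TGD.overSchema (τ : TGD) (sch : Finset (ℕ × ℕ)) : Prop :=
  ∀ a ∈ τ.body ∪ τ.head, (a.rel, a.args.length) ∈ sch

/-- `SemAc(C)` restricted to a fixed schema `sch` (a finite set of relation symbols,
i.e. of pairs of a relation name and an arity). -/
def L_SemAcSch (C : Set (Finset TGD)) (sch : Finset (ℕ × ℕ)) : Set (List Bool) :=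
  {w | ∃ (q : CQ) (S : Finset TGD), q.wf ∧ (∀ τ ∈ S, τ.wf) ∧ S ∈ C ∧
        q.overSchema sch ∧ (∀ τ ∈ S, τ.overSchema sch) ∧
        w = encLB (q, S) ∧ SemAcyclic S q}

/-- The language of the problem `AcBoolCont(C)`: encodings of triples of an acyclic
Boolean CQ `q`, a Boolean CQ `q'` and a finite set `S ∈ C` of tgds with `q ⊆_S q'`. -/
def L_AcBoolCont (C : Set (Finset TGD)) : Set (List Bool) :=
  {w | ∃ (q q' : CQ) (S : Finset TGD), q.wf ∧ q'.wf ∧ (∀ τ ∈ S, τ.wf) ∧ S ∈ C ∧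
        q.free = [] ∧ q'.free = [] ∧ q.Acyclic ∧
        w = encLB (q, q', S) ∧ ContUnder S q q'}

/-- The language of the problem `SemAc(C)` for a class `C` of sets of egds. -/
def L_SemAcE (C : Set (Finset EGD)) : Set (List Bool) :=
  {w | ∃ (q : CQ) (S : Finset EGD), q.wf ∧ (∀ ε ∈ S, ε.wf) ∧ S ∈ C ∧
        w = encLB (q, S) ∧ SemAcyclicE S q}

/-- `SemAc(C)` for egds, restricted to schemas whose arity is bounded by `r`. -/
def L_SemAcEAr (C : Set (Finset EGD)) (r : ℕ) : Set (List Bool) :=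
  {w | ∃ (q : CQ) (S : Finset EGD), q.wf ∧ (∀ ε ∈ S, ε.wf) ∧ S ∈ C ∧
        q.arityLE r ∧ (∀ ε ∈ S, ε.arityLE r) ∧
        w = encLB (q, S) ∧ SemAcyclicE S q}

end SemAcPaper

namespace SemAcPaper

/-! ### Unions of conjunctive queries and UCQ rewritability -/

/-- A union of conjunctive queries, and its evaluation. -/
def UCQeval (Q : List CQ) (I : Inst) : Set (List Tm) := {t | ∃ p ∈ Q, t ∈ p.eval I}

/-- A shift large enough so that the constants `c(x)` below are fresh for `q`. -/
def CQ.constShift (q : CQ) : ℕ :=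
  (q.atoms.sup fun a =>
    (a.args.filterMap fun t => match t with | Tm.const n => some n | _ => none).foldr max 0) + 1

/-- The fresh constant `c(x)` associated with the variable `x` of `q`. -/
def CQ.canonConst (q : CQ) (v : ℕ) : Tm := Tm.const (v + q.constShift)

/-- The database `D_q` obtained from `q` by replacing each variable `x` with the
constant `c(x)`. -/
def CQ.canonDB (q : CQ) : Inst :=
  (fun a : Atom => a.map (assign fun v => q.canonConst v)) '' (↑q.atoms : Set Atom)

/-- The tuple `c(x̄)` of constants associated with the free variables of `q`. -/
def CQ.canonTuple (q : CQ) : List Tm := q.free.map q.canonConst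

/-- `Q` is a UCQ rewriting of `q` and `S`: for every CQ `q'(x̄)`, `q' ⊆_S q` iff
`c(x̄) ∈ Q(D_q')`. -/
def IsUCQRewriting (S : Finset TGD) (q : CQ) (Q : List CQ) : Prop :=
  ∀ q' : CQ, q'.wf → (ContUnder S q' q ↔ q'.canonTuple ∈ UCQeval Q q'.canonDB)

/-- A class `C` of sets of tgds is UCQ rewritable if every CQ `q` and every
`S ∈ C` admit a UCQ rewriting. -/
def UCQRewritable (C : Set (Finset TGD)) : Prop :=
  ∀ (q : CQ) (S : Finset TGD), q.wf → (∀ τ ∈ S, τ.wf) → S ∈ C →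
    ∃ Q : List CQ, IsUCQRewriting S q Q

/-!
Let `q ≡_Σ qa` with `qa` acyclic. As `qa ⊆_Σ q`, some disjunct `p` of the rewriting maps into
`D_qa`, onto at most `|p| ≤ H` atoms of `qa`. In a join tree of `qa`, rooted at an atom carrying the
largest constant of `qa`, close the nodes of these atoms under meets: this at most doubles their
number, and relabelling each node of the subtree they span by its nearest retained ancestor gives a
join tree of the retained atoms. They form an acyclic subquery `q'` of `qa` with at most `2H` atoms
into whose canonical database `p` still maps (the choice of root keeps the fresh constants of
`D_qa`), so `q' ⊆_Σ q`; and `q ⊆_Σ qa ⊆ q'` since `q'` only drops atoms of `qa`. The free variables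
of `q'` occur in its atoms because those of a firing disjunct occur in its atoms: a disjunct with a
floating free variable would also fire on a query not contained in `q`.
-/

/-! ### Rooted trees -/

section RootedTree

open SimpleGraph

variable {V : Type*} {T : SimpleGraph V} (hT : T.IsTree) (r : V)

noncomputable def rootPath (v : V) : T.Walk v r := (hT.existsUnique_path v r).exists.choose

lemma rootPath_isPath (v : V) : (rootPath hT r v).IsPath :=
  (hT.existsUnique_path v r).exists.choose_spec

lemma eq_rootPath {v : V} {w : T.Walk v r} (hw : w.IsPath) : w = rootPath hT r v :=
  (hT.existsUnique_path v r).unique hw (rootPath_isPath hT r v)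

/-- We write `u ≼ v` for `u ∈ ancestors v`: the tree order, with the root as least element. -/
noncomputable def ancestors (v : V) : List V := (rootPath hT r v).support

local notation:50 u:51 " ≼ " v:51 => u ∈ ancestors hT r v

lemma self_mem_ancestors (v : V) : v ≼ v := Walk.start_mem_support _

lemma root_mem_ancestors (v : V) : r ≼ v := Walk.end_mem_support _

lemma ancestors_nodup (v : V) : (ancestors hT r v).Nodup :=
  (rootPath_isPath hT r v).support_nodup

lemma ancestors_root : ancestors hT r r = [r] := by
  rw [ancestors, ← eq_rootPath hT r Walk.IsPath.nil, Walk.support_nil]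

lemma ancestors_suffix {u v : V} (h : u ≼ v) : ancestors hT r u <:+ ancestors hT r v := by
  classical
  rw [ancestors, ← eq_rootPath hT r ((rootPath_isPath hT r v).dropUntil h)]
  exact Walk.support_dropUntil_suffix_support _ h

lemma ancestors_trans {u v w : V} (huv : u ≼ v) (hvw : v ≼ w) : u ≼ w :=
  (ancestors_suffix hT r hvw).subset huv

lemma ancestors_antisymm {u v : V} (huv : u ≼ v) (hvu : v ≼ u) : u = v := by
  have h := (ancestors_suffix hT r huv).sublist.antisymm (ancestors_suffix hT r hvu).sublist
  rw [ancestors, ancestors, ← Walk.cons_tail_support, ← Walk.cons_tail_support (rootPath hT r v)]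
    at h
  exact List.head_eq_of_cons_eq h

lemma ancestors_total {u v w : V} (hu : u ≼ w) (hv : v ≼ w) : u ≼ v ∨ v ≼ u := by
  rcases List.suffix_or_suffix_of_suffix (ancestors_suffix hT r hu) (ancestors_suffix hT r hv)
    with h | h
  · exact Or.inl (h.subset (self_mem_ancestors hT r u))
  · exact Or.inr (h.subset (self_mem_ancestors hT r v))

lemma ancestors_of_eq_append {v u : V} {l₁ l₂ : List V}
    (e : ancestors hT r v = l₁ ++ u :: l₂) : ancestors hT r u = u :: l₂ := by
  have hnd := ancestors_nodup hT r v
  rw [e, List.nodup_append] at hnd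
  obtain ⟨pre, hpre⟩ := ancestors_suffix hT r (show u ≼ v by simp [e])
  rw [ancestors, ← Walk.cons_tail_support] at hpre ⊢
  rw [← ancestors, e] at hpre
  exact congrArg _ ((List.append_cons_inj_of_notMem (fun h => hnd.2.2 u h u (by simp) rfl)
    (List.nodup_cons.mp hnd.2.1).1).mp hpre.symm).2.2.symm

lemma ancestors_of_adj {x y : V} (h : T.Adj x y) (hy : ¬ y ≼ x) :
    ancestors hT r y = y :: ancestors hT r x := by
  rw [ancestors, ← eq_rootPath hT r ((rootPath_isPath hT r x).cons (h := h.symm) hy),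
    Walk.support_cons]
  rfl

lemma ancestors_of_adj_or {x y : V} (h : T.Adj x y) :
    ancestors hT r x = x :: ancestors hT r y ∨ ancestors hT r y = y :: ancestors hT r x := by
  by_cases hy : y ≼ x
  · refine Or.inl (ancestors_of_adj hT r h.symm fun hx => h.ne ?_)
    exact ancestors_antisymm hT r hx hy
  · exact Or.inr (ancestors_of_adj hT r h hy)

lemma exists_parent {v : V} (hv : v ≠ r) :
    ∃ p, T.Adj v p ∧ ancestors hT r v = v :: ancestors hT r p := by
  have hp := rootPath_isPath hT r v
  unfold ancestors
  cases hw : rootPath hT r v with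
  | nil => exact absurd rfl hv
  | cons h w =>
    rw [hw] at hp
    exact ⟨_, h, by rw [Walk.support_cons, eq_rootPath hT r hp.of_cons]⟩

lemma le_of_ancestors_eq_cons {v p : V} (hp : ancestors hT r v = v :: ancestors hT r p) :
    p ≼ v := by
  rw [hp]
  exact List.mem_cons_of_mem _ (self_mem_ancestors hT r p)

lemma reachable_of_between {U : Set V} {x y : V} (hxy : x ≼ y)
    (hU : ∀ u, x ≼ u → u ≼ y → u ∈ U) :
    (T.induce U).Reachable ⟨y, hU y hxy (self_mem_ancestors hT r y)⟩
      ⟨x, hU x (self_mem_ancestors hT r x) hxy⟩ := by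
  induction hn : (ancestors hT r y).length generalizing y with
  | zero => simp [ancestors] at hn
  | succ n ih =>
    by_cases hyx : y = x
    · subst hyx
      rfl
    have hyr : y ≠ r := by
      rintro rfl
      rw [ancestors_root] at hxy
      exact hyx (List.mem_singleton.mp hxy).symm
    obtain ⟨p, hadj, hp⟩ := exists_parent hT r hyr
    have hpy : p ≼ y := le_of_ancestors_eq_cons hT r hp
    have hxp : x ≼ p := by
      rw [hp] at hxy
      exact (List.mem_cons.mp hxy).resolve_left (Ne.symm hyx)
    have hpx := ih hxp (fun u hxu hup => hU u hxu (ancestors_trans hT r hup hpy))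
      (by rw [hp, List.length_cons] at hn; omega)
    have hadj' : (T.induce U).Adj ⟨y, hU y hxy (self_mem_ancestors hT r y)⟩
        ⟨p, hU p hxp hpy⟩ := hadj
    exact hadj'.reachable.trans hpx

open Classical in
/-- The default `r` is junk: every lemma below assumes `r ∈ S`. -/
noncomputable def nearestAncestorIn (S : Set V) (v : V) : V :=
  ((ancestors hT r v).find? (· ∈ S)).getD r

section nearestAncestorIn

variable {S : Set V}

lemma nearestAncestorIn_spec (hr : r ∈ S) (v : V) :
    nearestAncestorIn hT r S v ∈ S ∧ nearestAncestorIn hT r S v ≼ v ∧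
      ∀ u ∈ S, u ≼ v → u ≼ nearestAncestorIn hT r S v := by
  classical
  unfold nearestAncestorIn
  obtain ⟨m, hm⟩ := Option.isSome_iff_exists.mp
    (List.find?_isSome (p := (· ∈ S)).mpr ⟨r, root_mem_ancestors hT r v, decide_eq_true hr⟩)
  obtain ⟨hmS, l₁, l₂, e, hl₁⟩ := List.find?_eq_some_iff_append.mp hm
  rw [hm, Option.getD_some, ancestors_of_eq_append hT r e]
  refine ⟨by simpa using hmS, by simp [e], fun u hu huv => ?_⟩
  rw [e, List.mem_append] at huv
  exact huv.resolve_left fun h => by simpa [hu] using hl₁ u h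

lemma nearestAncestorIn_mem (hr : r ∈ S) (v : V) : nearestAncestorIn hT r S v ∈ S :=
  (nearestAncestorIn_spec hT r hr v).1

lemma nearestAncestorIn_le (hr : r ∈ S) (v : V) : nearestAncestorIn hT r S v ≼ v :=
  (nearestAncestorIn_spec hT r hr v).2.1

lemma le_nearestAncestorIn (hr : r ∈ S) {u v : V} (hu : u ∈ S) (huv : u ≼ v) :
    u ≼ nearestAncestorIn hT r S v :=
  (nearestAncestorIn_spec hT r hr v).2.2 u hu huv

lemma nearestAncestorIn_eq (hr : r ∈ S) {v m : V} (hm : m ∈ S) (hmv : m ≼ v)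
    (h : ∀ u ∈ S, u ≼ v → u ≼ m) : nearestAncestorIn hT r S v = m :=
  ancestors_antisymm hT r (h _ (nearestAncestorIn_mem hT r hr v) (nearestAncestorIn_le hT r hr v))
    (le_nearestAncestorIn hT r hr hm hmv)

lemma nearestAncestorIn_self (hr : r ∈ S) {m : V} (hm : m ∈ S) :
    nearestAncestorIn hT r S m = m :=
  nearestAncestorIn_eq hT r hr hm (self_mem_ancestors hT r m) fun _ _ h => h

end nearestAncestorIn

noncomputable def meet (x y : V) : V := nearestAncestorIn hT r {u | u ≼ y} x

lemma meet_le_left (x y : V) : meet hT r x y ≼ x :=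
  nearestAncestorIn_le hT r (root_mem_ancestors hT r y) x

lemma meet_le_right (x y : V) : meet hT r x y ≼ y :=
  nearestAncestorIn_mem (S := {u | u ≼ y}) hT r (root_mem_ancestors hT r y) x

lemma le_meet {u x y : V} (hx : u ≼ x) (hy : u ≼ y) : u ≼ meet hT r x y :=
  le_nearestAncestorIn hT r (root_mem_ancestors hT r y) hy hx

lemma meet_eq {x y m : V} (hx : m ≼ x) (hy : m ≼ y) (h : ∀ u, u ≼ x → u ≼ y → u ≼ m) :
    meet hT r x y = m :=
  nearestAncestorIn_eq hT r (root_mem_ancestors hT r y) hy hx fun u hu hux => h u hux hu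

lemma meet_comm (x y : V) : meet hT r x y = meet hT r y x :=
  meet_eq hT r (meet_le_right hT r y x) (meet_le_left hT r y x) fun _ hx hy => le_meet hT r hy hx

lemma meet_eq_left {x y : V} (h : x ≼ y) : meet hT r x y = x :=
  meet_eq hT r (self_mem_ancestors hT r x) h fun _ hx _ => hx

lemma meet_self (x : V) : meet hT r x x = x := meet_eq_left hT r (self_mem_ancestors hT r x)

lemma meet_eq_meet_parent {v p y : V} (hp : ancestors hT r v = v :: ancestors hT r p)
    (hv : ¬ v ≼ y) : meet hT r v y = meet hT r p y := by
  refine meet_eq hT r ?_ (meet_le_right hT r p y) fun u huv huy => le_meet hT r ?_ huy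
  · exact ancestors_trans hT r (meet_le_left hT r p y) (le_of_ancestors_eq_cons hT r hp)
  · rw [hp] at huv
    exact (List.mem_cons.mp huv).resolve_left fun h => hv (h ▸ huy)

lemma mem_of_walk {U : Set V} {a b : V} (w : T.Walk a b) (hw : ∀ z ∈ w.support, z ∈ U) {x : V}
    (h₁ : meet hT r a b ≼ x) (h₂ : x ≼ a) : x ∈ U := by
  induction w generalizing x with
  | nil =>
    rw [meet_self] at h₁
    exact ancestors_antisymm hT r h₂ h₁ ▸ hw _ (Walk.start_mem_support _)
  | @cons a c b hadj w ih =>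
    have hw' : ∀ z ∈ w.support, z ∈ U := fun z hz => hw z (by simp [hz])
    by_cases hab : a ≼ b
    · rw [meet_eq_left hT r hab] at h₁
      exact ancestors_antisymm hT r h₂ h₁ ▸ hw _ (Walk.start_mem_support _)
    rcases ancestors_of_adj_or hT r hadj with hac | hca
    · rw [meet_eq_meet_parent hT r hac hab] at h₁
      rw [hac] at h₂
      rcases List.mem_cons.mp h₂ with rfl | h₂
      · exact hw _ (Walk.start_mem_support _)
      · exact ih hw' h₁ h₂
    · have hcb : ¬ c ≼ b := fun h =>
        hab (ancestors_trans hT r (le_of_ancestors_eq_cons hT r hca) h)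
      rw [← meet_eq_meet_parent hT r hca hcb] at h₁
      exact ih hw' h₁ (ancestors_trans hT r h₂ (le_of_ancestors_eq_cons hT r hca))

lemma mem_of_preconnected {U : Set V} (hU : (T.induce U).Preconnected) {a b x : V} (ha : a ∈ U)
    (hb : b ∈ U) (h₁ : meet hT r a b ≼ x) (h₂ : x ≼ a) : x ∈ U := by
  obtain ⟨w⟩ := hU ⟨a, ha⟩ ⟨b, hb⟩
  refine mem_of_walk hT r (w.map (Embedding.induce U).toHom) (fun z hz => ?_) h₁ h₂
  obtain ⟨z, -, rfl⟩ := List.mem_map.mp (by simpa only [Walk.support_map] using hz)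
  exact z.2

def IsMeetClosed (W : Set V) : Prop := r ∈ W ∧ ∀ x ∈ W, ∀ y ∈ W, meet hT r x y ∈ W

/-- The point where the path from `m` to the root enters the subtree spanned by `W`. -/
noncomputable def gate (W : Set V) (m : V) : V := nearestAncestorIn hT r {u | ∃ w ∈ W, u ≼ w} m

lemma gate_spec {W : Set V} (hr : r ∈ W) (m : V) :
    (∃ w ∈ W, gate hT r W m ≼ w) ∧ gate hT r W m ≼ m ∧
      ∀ u, (∃ w ∈ W, u ≼ w) → u ≼ m → u ≼ gate hT r W m :=
  nearestAncestorIn_spec (S := {u | ∃ w ∈ W, u ≼ w}) hT r ⟨r, hr, self_mem_ancestors hT r r⟩ m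

lemma meet_eq_meet_gate {W : Set V} (hr : r ∈ W) (m : V) {c : V} (hc : c ∈ W) :
    meet hT r m c = meet hT r (gate hT r W m) c := by
  obtain ⟨-, hgm, hmax⟩ := gate_spec hT r hr m
  refine (meet_eq hT r ?_ (meet_le_right hT r m c) fun u hu huc => le_meet hT r ?_ huc).symm
  · exact hmax _ ⟨c, hc, meet_le_right hT r m c⟩ (meet_le_left hT r m c)
  · exact ancestors_trans hT r hu hgm

lemma meet_gate_left {W : Set V} (hr : r ∈ W) (m : V) :
    meet hT r m (gate hT r W m) = gate hT r W m := by
  rw [meet_comm, meet_eq_left hT r (gate_spec hT r hr m).2.1]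

lemma meet_gate_mem_or_eq {W : Set V} (hW : IsMeetClosed hT r W) (m : V) {c : V} (hc : c ∈ W) :
    meet hT r (gate hT r W m) c ∈ W ∨ meet hT r (gate hT r W m) c = gate hT r W m := by
  obtain ⟨⟨c', hc', hgc'⟩, -, -⟩ := gate_spec hT r hW.1 m
  set g := gate hT r W m
  rcases ancestors_total hT r (meet_le_left hT r c' c) hgc' with h | h
  · left
    convert hW.2 c' hc' c hc using 1
    refine meet_eq hT r h (meet_le_right hT r c' c) fun u hug huc => ?_
    exact le_meet hT r (ancestors_trans hT r hug hgc') huc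
  · exact Or.inr (meet_eq_left hT r (ancestors_trans hT r h (meet_le_right hT r c' c)))

/-- A new meet `meet m c` equals `meet (gate m) c`, which lies in `W` or is the gate itself. -/
lemma IsMeetClosed.insert_gate {W : Set V} (hW : IsMeetClosed hT r W) (m : V) :
    IsMeetClosed hT r (insert m (insert (gate hT r W m) W)) := by
  set g := gate hT r W m
  have hm : ∀ x ∈ insert m (insert g W), meet hT r m x ∈ insert m (insert g W) := by
    rintro x (rfl | rfl | hx)
    · simp [meet_self]
    · simp [g, meet_gate_left hT r hW.1]
    · rw [meet_eq_meet_gate hT r hW.1 m hx]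
      rcases meet_gate_mem_or_eq hT r hW m hx with h | h <;> simp [g, h]
  have hg : ∀ x ∈ insert m (insert g W), meet hT r g x ∈ insert m (insert g W) := by
    rintro x (rfl | rfl | hx)
    · simp [g, meet_comm hT r g, meet_gate_left hT r hW.1]
    · simp [meet_self]
    · rcases meet_gate_mem_or_eq hT r hW m hx with h | h <;> simp [g, h]
  refine ⟨by simp [hW.1], ?_⟩
  rintro x (rfl | rfl | hx) y hy
  · exact hm y hy
  · exact hg y hy
  rcases hy with rfl | rfl | hy
  · rw [meet_comm]; exact hm x (by simp [hx])
  · rw [meet_comm]; exact hg x (by simp [hx])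
  · simp [hW.2 x hx y hy]

lemma gate_singleton_root (m : V) : gate hT r {r} m = r := by
  obtain ⟨⟨w, hw, hgw⟩, -, -⟩ := gate_spec hT r (Set.mem_singleton r) m
  rw [Set.mem_singleton_iff.mp hw, ancestors_root] at hgw
  exact List.mem_singleton.mp hgw

lemma isMeetClosed_singleton_root : IsMeetClosed hT r {r} := by
  simp [IsMeetClosed, meet_self]

lemma exists_isMeetClosed [DecidableEq V] {M : Finset V} (hM : M.Nonempty) :
    ∃ W : Finset V, IsMeetClosed hT r W ∧ M ⊆ W ∧ W.card ≤ 2 * M.card := by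
  induction hM using Finset.Nonempty.cons_induction with
  | singleton m =>
    refine ⟨{m, r}, ?_, by simp, Finset.card_le_two⟩
    have := (isMeetClosed_singleton_root hT r).insert_gate hT r m
    rwa [gate_singleton_root, Set.insert_eq_of_mem (Set.mem_singleton r), ← Finset.coe_pair]
      at this
  | cons m M hmM hM ih =>
    obtain ⟨W, hW, hMW, hcard⟩ := ih
    refine ⟨insert m (insert (gate hT r W m) W), by simpa using hW.insert_gate hT r m, ?_, ?_⟩
    · rw [Finset.cons_eq_insert]
      exact Finset.insert_subset_insert _ (hMW.trans (Finset.subset_insert _ _))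
    · rw [Finset.card_cons]
      have := Finset.card_insert_le m (insert (gate hT r W m) W)
      have := Finset.card_insert_le (gate hT r W m) W
      omega

end RootedTree

/-! ### Join trees of meet-closed sets -/

section JoinTree

open SimpleGraph

variable {V : Type} {T : SimpleGraph V} (hT : T.IsTree) (r : V)

local notation:50 u:51 " ≼ " v:51 => u ∈ ancestors hT r v

lemma isTree_induce_of_lowerClosed {St : Set V} (hr : r ∈ St)
    (hSt : ∀ v ∈ St, ∀ u, u ≼ v → u ∈ St) : (T.induce St).IsTree := by
  have hroot (v : St) : (T.induce St).Reachable v ⟨r, hr⟩ :=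
    reachable_of_between hT r (root_mem_ancestors hT r v.1) fun u _ huv => hSt v.1 v.2 u huv
  have : Nonempty St := ⟨⟨r, hr⟩⟩
  exact ⟨⟨fun x y => (hroot x).trans (hroot y).symm⟩, hT.isAcyclic.induce St⟩

lemma preconnected_relabel {lab : V → Atom}
    (hlab : ∀ t : Tm, (T.induce {v | t ∈ (lab v).args}).Preconnected) {W : Set V}
    (hW : IsMeetClosed hT r W) (t : Tm) :
    (T.induce {v | (∃ w ∈ W, v ≼ w) ∧
      t ∈ (lab (nearestAncestorIn hT r W v)).args}).Preconnected := by
  set near := nearestAncestorIn hT r W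
  have hnear (v : V) : near v ∈ W ∧ near v ≼ v := ⟨nearestAncestorIn_mem hT r hW.1 v,
    nearestAncestorIn_le hT r hW.1 v⟩
  -- the new label `near u` lies on the tree path between the labels `near v` and `b`
  have between : ∀ v b, (∃ w ∈ W, v ≼ w) → t ∈ (lab (near v)).args → b ∈ W →
      t ∈ (lab b).args → ∀ u, meet hT r (near v) b ≼ u → u ≼ v →
        (∃ w ∈ W, u ≼ w) ∧ t ∈ (lab (near u)).args := by
    rintro v b ⟨w, hw, hvw⟩ hv hb htb u h₁ h₂
    refine ⟨⟨w, hw, ancestors_trans hT r h₂ hvw⟩, mem_of_preconnected hT r (hlab t) hv htb ?_ ?_⟩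
    · exact le_nearestAncestorIn hT r hW.1 (hW.2 _ (hnear v).1 _ hb) h₁
    · exact le_nearestAncestorIn hT r hW.1 (hnear u).1 (ancestors_trans hT r (hnear u).2 h₂)
  rintro ⟨v₁, hSt₁, ht₁⟩ ⟨v₂, hSt₂, ht₂⟩
  have hℓ₁ := ancestors_trans hT r (meet_le_left hT r (near v₁) (near v₂)) (hnear v₁).2
  have hℓ₂ := ancestors_trans hT r (meet_le_right hT r (near v₁) (near v₂)) (hnear v₂).2
  have reach₁ := reachable_of_between hT r hℓ₁ (between v₁ _ hSt₁ ht₁ (hnear v₂).1 ht₂)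
  rw [meet_comm] at hℓ₂
  have reach₂ := reachable_of_between hT r hℓ₂ (between v₂ _ hSt₂ ht₂ (hnear v₁).1 ht₁)
  simp only [meet_comm hT r (near v₂) (near v₁)] at reach₂
  exact reach₁.trans reach₂.symm

theorem acyclicInst_image_of_isMeetClosed {lab : V → Atom}
    (hlab : ∀ t : Tm, (T.induce {v | t ∈ (lab v).args}).Preconnected) {W : Set V}
    (hW : IsMeetClosed hT r W) : AcyclicInst (lab '' W) := by
  set St := {v | ∃ w ∈ W, v ≼ w}
  have hWSt : ∀ w ∈ W, w ∈ St := fun w hw => ⟨w, hw, self_mem_ancestors hT r w⟩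
  refine Or.inr ⟨St, T.induce St, fun v => lab (nearestAncestorIn hT r W v), ?_,
    fun v => ⟨_, nearestAncestorIn_mem hT r hW.1 v, rfl⟩, ?_, fun t => ?_⟩
  · refine isTree_induce_of_lowerClosed hT r (hWSt r hW.1) fun v ⟨w, hw, hvw⟩ u huv => ?_
    exact ⟨w, hw, ancestors_trans hT r huv hvw⟩
  · rintro _ ⟨w, hw, rfl⟩
    exact ⟨⟨w, hWSt w hw⟩, congrArg lab (nearestAncestorIn_self hT r hW.1 hw)⟩
  · refine (preconnected_relabel hT r hlab hW t).map ⟨fun v => ⟨⟨v.1, v.2.1⟩, v.2.2⟩, id⟩ ?_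
    rintro ⟨⟨v, hv⟩, ht⟩
    exact ⟨⟨v, hv, ht⟩, rfl⟩

end JoinTree

lemma AcyclicInst.exists_subset {I : Inst} (hI : AcyclicInst I) {a₀ : Atom} (ha₀ : a₀ ∈ I)
    {B : Finset Atom} (hB : ↑B ⊆ I) (hBne : B.Nonempty) :
    ∃ J : Finset Atom, ↑J ⊆ I ∧ a₀ ∈ J ∧ B ⊆ J ∧ J.card ≤ 2 * B.card ∧ AcyclicInst ↑J := by
  classical
  obtain hI | ⟨V, T, lab, hT, hlabI, hsurj, hlab⟩ := hI
  · exact absurd (hI ▸ ha₀) (Set.notMem_empty a₀)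
  have : Nonempty V := let ⟨v, _⟩ := hsurj a₀ ha₀; ⟨v⟩
  choose! node hnode using hsurj
  obtain ⟨W, hW, hMW, hcard⟩ := exists_isMeetClosed hT (node a₀) (hBne.image node)
  refine ⟨W.image lab, ?_, ?_, fun b hb => ?_, ?_, ?_⟩
  · simpa [Set.subset_def] using fun v _ => hlabI v
  · exact Finset.mem_image.mpr ⟨node a₀, hW.1, hnode a₀ ha₀⟩
  · exact Finset.mem_image.mpr ⟨node b, hMW (Finset.mem_image_of_mem node hb), hnode b (hB hb)⟩
  · calc (W.image lab).card ≤ W.card := Finset.card_image_le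
      _ ≤ 2 * (B.image node).card := hcard
      _ ≤ 2 * B.card := Nat.mul_le_mul_left 2 Finset.card_image_le
  · rw [Finset.coe_image]
    exact acyclicInst_image_of_isMeetClosed hT _ hlab hW

lemma Atom.map_varToNull_injOn : Set.InjOn (Atom.map varToNull) {a | ∀ t ∈ a.args, ¬ t.isNull} := by
  let nullToVar : Tm → Tm := fun t => match t with
    | .null n => .var n
    | t => t
  refine Set.LeftInvOn.injOn (f₁' := Atom.map nullToVar) fun a ha => ?_
  simp only [Atom.map, List.map_map]
  congr
  refine (List.map_congr_left fun t ht => ?_).trans (List.map_id _)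
  have := ha t ht
  cases t <;> simp_all [varToNull, nullToVar, Tm.isNull]

lemma CQ.Acyclic.exists_subset {qa : CQ} (hac : qa.Acyclic)
    (hnn : ∀ a ∈ qa.atoms, ∀ t ∈ a.args, ¬ t.isNull) {a₀ : Atom} (ha₀ : a₀ ∈ qa.atoms)
    {B : Finset Atom} (hB : B ⊆ qa.atoms) (hBne : B.Nonempty) (fr : List ℕ) :
    ∃ s ⊆ qa.atoms, a₀ ∈ s ∧ B ⊆ s ∧ s.card ≤ 2 * B.card ∧ (CQ.mk fr s).Acyclic := by
  classical
  obtain ⟨J, hJ, ha₀J, hBJ, hcard, hJac⟩ := AcyclicInst.exists_subset hac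
    ⟨a₀, ha₀, rfl⟩ (B := B.image (Atom.map varToNull))
    (by simpa [CQ.inst, Set.subset_def] using fun b hb => ⟨b, hB hb, rfl⟩) (hBne.image _)
  set s := qa.atoms.filter fun b => b.map varToNull ∈ J
  have hinst : (CQ.mk fr s).inst = J := by
    ext x
    refine ⟨?_, fun hx => ?_⟩
    · rintro ⟨b, hb, rfl⟩
      exact (Finset.mem_filter.mp hb).2
    · obtain ⟨b, hb, rfl⟩ := hJ hx
      exact ⟨b, Finset.mem_filter.mpr ⟨hb, hx⟩, rfl⟩
  refine ⟨s, Finset.filter_subset _ _, Finset.mem_filter.mpr ⟨ha₀, ha₀J⟩,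
    fun b hb => Finset.mem_filter.mpr ⟨hB hb, hBJ (Finset.mem_image_of_mem _ hb)⟩, ?_, ?_⟩
  · calc s.card ≤ J.card := Finset.card_le_card_of_injOn _
          (fun b hb => (Finset.mem_filter.mp hb).2)
          (Atom.map_varToNull_injOn.mono fun b hb => hnn b (Finset.mem_filter.mp hb).1)
      _ ≤ 2 * (B.image (Atom.map varToNull)).card := hcard
      _ ≤ 2 * B.card := Nat.mul_le_mul_left 2 Finset.card_image_le
  · rw [CQ.Acyclic, hinst]
    exact hJac

/-! ### Canonical databases and subqueries -/

lemma Atom.mem_map_assign {h : ℕ → Tm} {a : Atom} {u : Tm} :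
    u ∈ (a.map (assign h)).args ↔
      (u ∈ a.args ∧ ¬ u.isVar) ∨ ∃ v, Tm.var v ∈ a.args ∧ h v = u := by
  simp only [Atom.map, List.mem_map]
  constructor
  · rintro ⟨t, ht, rfl⟩
    cases t with
    | var v => exact Or.inr ⟨v, ht, rfl⟩
    | _ n => exact Or.inl ⟨ht, by simp [assign, Tm.isVar]⟩
  · rintro (⟨hu, hnv⟩ | ⟨v, hv, rfl⟩)
    · cases u with
      | var v => exact absurd trivial hnv
      | _ n => exact ⟨_, hu, rfl⟩
    · exact ⟨_, hv, rfl⟩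

lemma Atom.map_assign_congr {h₁ h₂ : ℕ → Tm} {a : Atom}
    (h : ∀ v, Tm.var v ∈ a.args → h₁ v = h₂ v) : a.map (assign h₁) = a.map (assign h₂) := by
  simp only [Atom.map, Atom.mk.injEq, List.map_inj_left, true_and]
  intro t ht
  cases t with
  | var v => exact h v ht
  | _ n => rfl

lemma CQ.eval_subset_eval_mk {q : CQ} {s : Finset Atom} (hs : s ⊆ q.atoms) (I : Inst) :
    q.eval I ⊆ (CQ.mk q.free s).eval I := by
  rintro _ ⟨h, hhom, rfl⟩
  exact ⟨h, ⟨hhom.1, fun a ha => hhom.2 a (hs ha)⟩, rfl⟩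

def Atom.maxConst (a : Atom) : ℕ :=
  (a.args.filterMap fun t => match t with | Tm.const n => some n | _ => none).foldr max 0

lemma CQ.constShift_eq (q : CQ) : q.constShift = q.atoms.sup Atom.maxConst + 1 := rfl

lemma Atom.le_maxConst {a : Atom} {c : ℕ} (hc : Tm.const c ∈ a.args) : c ≤ a.maxConst :=
  List.le_max_of_le' 0 (List.mem_filterMap.mpr ⟨_, hc, rfl⟩) le_rfl

lemma CQ.const_lt_constShift {q : CQ} {a : Atom} (ha : a ∈ q.atoms) {c : ℕ}
    (hc : Tm.const c ∈ a.args) : c < q.constShift := by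
  rw [CQ.constShift_eq, Nat.lt_succ_iff]
  exact (Atom.le_maxConst hc).trans (Finset.le_sup ha)

lemma CQ.canonConst_injective (q : CQ) : Function.Injective q.canonConst := fun _ _ h => by
  simpa [CQ.canonConst] using h

lemma CQ.var_mem_of_canonConst_mem {q : CQ} {b : Atom} (hb : b ∈ q.atoms) {x : ℕ}
    (hx : q.canonConst x ∈ (b.map (assign q.canonConst)).args) : Tm.var x ∈ b.args := by
  rcases Atom.mem_map_assign.mp hx with ⟨hc, -⟩ | ⟨v, hv, hvx⟩
  · exact absurd (q.const_lt_constShift hb hc) (by simp)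
  · rwa [← q.canonConst_injective hvx]

/-- The fresh constant `c(x)` of a free variable `x` can only enter `D_q'` through an atom
mentioning `x`. -/
lemma CQ.wf_of_mem_eval_canonDB {q' p : CQ} (hnd : q'.free.Nodup)
    (hnn : ∀ a ∈ q'.atoms, ∀ t ∈ a.args, ¬ t.isNull) (hp : ∀ y ∈ p.free, y ∈ varsOf p.atoms)
    (hfire : q'.canonTuple ∈ p.eval q'.canonDB) : q'.wf := by
  refine ⟨hnd, fun x hx => ?_, hnn⟩
  obtain ⟨h, hhom, htup⟩ := hfire
  have hcx : q'.canonConst x ∈ q'.canonTuple := List.mem_map_of_mem hx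
  obtain ⟨y, hy, hyx⟩ := List.mem_map.mp (htup ▸ hcx)
  obtain ⟨a, ha, hya⟩ := hp y hy
  obtain ⟨b, hb, hba⟩ := hhom.2 a ha
  refine ⟨b, hb, CQ.var_mem_of_canonConst_mem hb ?_⟩
  rw [show b.map (assign q'.canonConst) = a.map (assign h) from hba, ← hyx]
  exact Atom.mem_map_assign.mpr (Or.inr ⟨y, hya, rfl⟩)

lemma CQ.constShift_mk_eq {q : CQ} {s : Finset Atom} (hs : s ⊆ q.atoms) {a₀ : Atom} (ha₀ : a₀ ∈ s)
    (hmax : q.atoms.sup Atom.maxConst = a₀.maxConst) (fr : List ℕ) :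
    (CQ.mk fr s).constShift = q.constShift := by
  rw [CQ.constShift_eq, CQ.constShift_eq,
    le_antisymm (Finset.sup_mono hs) (hmax ▸ Finset.le_sup ha₀)]

lemma CQ.mem_eval_canonDB_mk {qa p : CQ} {s : Finset Atom}
    (hshift : (CQ.mk qa.free s).constShift = qa.constShift) {h : ℕ → Tm}
    (hhom : p.homOf h qa.canonDB) (htup : qa.canonTuple = p.free.map h)
    (himg : ∀ a ∈ p.atoms, ∃ b ∈ s, b.map (assign qa.canonConst) = a.map (assign h)) :
    (CQ.mk qa.free s).canonTuple ∈ p.eval (CQ.mk qa.free s).canonDB := by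
  have hcc : (CQ.mk qa.free s).canonConst = qa.canonConst :=
    funext fun v => by rw [CQ.canonConst, CQ.canonConst, hshift]
  refine ⟨h, ⟨hhom.1, fun a ha => ?_⟩, ?_⟩
  · obtain ⟨b, hb, e⟩ := himg a ha
    exact ⟨b, hb, by simpa only [hcc] using e⟩
  · rw [← htup, CQ.canonTuple, CQ.canonTuple, hcc]

lemma exists_acyclic_subquery {qa p : CQ} (hqa : qa.wf) (hac : qa.Acyclic)
    (hp : ∀ y ∈ p.free, y ∈ varsOf p.atoms) (hfire : qa.canonTuple ∈ p.eval qa.canonDB) :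
    ∃ s ⊆ qa.atoms, s.card ≤ 2 * p.atoms.card ∧ (CQ.mk qa.free s).Acyclic ∧
      (CQ.mk qa.free s).canonTuple ∈ p.eval (CQ.mk qa.free s).canonDB := by
  classical
  obtain ⟨h, hhom, htup⟩ := hfire
  rcases p.atoms.eq_empty_or_nonempty with hpe | hpne
  · have hpfree : p.free = [] := List.eq_nil_iff_forall_not_mem.mpr fun y hy => by
      simpa [varsOf, hpe] using hp y hy
    have hfree : qa.free = [] := by simpa [CQ.canonTuple, hpfree] using htup
    refine ⟨∅, Finset.empty_subset _, by simp, Or.inl (by simp [CQ.inst]), h,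
      ⟨hhom.1, by simp [hpe]⟩, by simp [CQ.canonTuple, hfree, hpfree]⟩
  have : Nonempty Atom := ⟨⟨0, []⟩⟩
  have hpre : ∀ a ∈ p.atoms, ∃ b ∈ qa.atoms, b.map (assign qa.canonConst) = a.map (assign h) :=
    fun a ha => hhom.2 a ha
  choose! pre hpre_mem hpre_eq using hpre
  -- keeping an atom with the largest constant of `qa` keeps the fresh constants of `D_qa`
  obtain ⟨a₀, ha₀, hmax⟩ := Finset.exists_mem_eq_sup qa.atoms
    ((hpne.image pre).mono (by simpa [Finset.subset_iff] using hpre_mem)) Atom.maxConst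
  obtain ⟨s, hs, ha₀s, hBs, hcard, hacs⟩ := hac.exists_subset hqa.2.2 ha₀
    (B := p.atoms.image pre) (by simpa [Finset.subset_iff] using hpre_mem) (hpne.image pre) qa.free
  refine ⟨s, hs, hcard.trans (Nat.mul_le_mul_left 2 Finset.card_image_le), hacs,
    CQ.mem_eval_canonDB_mk (CQ.constShift_mk_eq hs ha₀s hmax _) hhom htup fun a ha => ?_⟩
  exact ⟨pre a, hBs (Finset.mem_image_of_mem _ ha), hpre_eq a ha⟩

/-! ### Free variables of a firing disjunct -/

lemma varsOf_finite (s : Finset Atom) : (varsOf s).Finite := by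
  refine (s.finite_toSet.biUnion fun a _ =>
    a.args.finite_toSet.preimage (Set.injOn_of_injective fun _ _ => Tm.var.inj)).subset ?_
  rintro v ⟨a, ha, hv⟩
  exact Set.mem_biUnion ha hv

def nullModel (Z : ℕ) : Inst :=
  {a | (∀ t ∈ a.args, ¬ t.isVar) ∧ (Tm.null 0 ∈ a.args → a.rel = Z)}

lemma isInstance_nullModel (Z : ℕ) : IsInstance (nullModel Z) := fun _ ha => ha.1

lemma map_assign_mem_nullModel_iff {h : ℕ → Tm} (hh : ∀ v, ¬ (h v).isVar) {a : Atom}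
    {Z : ℕ} :
    a.map (assign h) ∈ nullModel Z ↔ (Tm.null 0 ∈ (a.map (assign h)).args → a.rel = Z) := by
  refine ⟨And.right, fun hZ => ⟨fun t ht => ?_, hZ⟩⟩
  rcases Atom.mem_map_assign.mp ht with ⟨-, ht⟩ | ⟨v, -, rfl⟩
  exacts [ht, hh v]

/-- A trigger never sends a body variable to `Tm.null 0`, since the body avoids `Z`; so the head is
satisfied by sending its existential variables to a constant. -/
lemma satTGDs_nullModel {S : Finset TGD} (hS : ∀ τ ∈ S, τ.wf) {Z : ℕ}
    (hZ : ∀ τ ∈ S, ∀ a ∈ τ.body ∪ τ.head, a.rel ≠ Z) : SatTGDs (nullModel Z) S := by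
  classical
  intro τ hτ h hh hbody
  let h' : ℕ → Tm := fun v => if v ∈ varsOf τ.body then h v else Tm.const 0
  have hh' : ∀ v, ¬ (h' v).isVar := fun v => by
    by_cases hv : v ∈ varsOf τ.body
    · simpa [h', hv] using hh v
    · simp [h', hv, Tm.isVar]
  refine ⟨h', hh', fun v hv => if_pos hv, fun a ha => ?_⟩
  refine (map_assign_mem_nullModel_iff hh').mpr fun hnull => ?_
  rcases Atom.mem_map_assign.mp hnull with ⟨hn, -⟩ | ⟨v, -, hv⟩
  · exact absurd trivial ((hS τ hτ).2.2 a (Finset.mem_union_right _ ha) _ hn)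
  by_cases hvb : v ∈ varsOf τ.body
  · have hv' : h v = Tm.null 0 := by simpa [h', hvb] using hv
    obtain ⟨b, hb, hvb⟩ := hvb
    have hrel := (hbody b hb).2 (Atom.mem_map_assign.mpr (Or.inr ⟨v, hvb, hv'⟩))
    exact absurd hrel (hZ τ hτ b (Finset.mem_union_left _ hb))
  · simp [h', hvb] at hv

lemma null_notMem_of_mem_eval_nullModel {q : CQ} (hq : ∀ x ∈ q.free, x ∈ varsOf q.atoms)
    {Z : ℕ} (hZ : ∀ a ∈ q.atoms, a.rel ≠ Z) {t : List Tm} (ht : t ∈ q.eval (nullModel Z)) :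
    Tm.null 0 ∉ t := by
  obtain ⟨g, hg, rfl⟩ := ht
  intro hnull
  obtain ⟨x, hx, hgx⟩ := List.mem_map.mp hnull
  obtain ⟨a, ha, hxa⟩ := hq x hx
  exact hZ a ha ((hg.2 a ha).2 (Atom.mem_map_assign.mpr (Or.inr ⟨x, hxa, hgx⟩)))

def CQ.detachFree (q : CQ) (j z Z : ℕ) : CQ := ⟨q.free.set j z, insert ⟨Z, [Tm.var z]⟩ q.atoms⟩

section detachFree

variable {q : CQ} {j z Z : ℕ}

lemma CQ.detachFree_wf (hq : q.wf) (hz : z ∉ varsOf q.atoms) : (q.detachFree j z Z).wf := by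
  refine ⟨hq.1.set fun hzq => hz (hq.2.1 z hzq), fun x hx => ?_, fun a ha t ht => ?_⟩
  · rcases List.mem_or_eq_of_mem_set hx with hx | rfl
    · obtain ⟨a, ha, hxa⟩ := hq.2.1 x hx
      exact ⟨a, Finset.mem_insert_of_mem ha, hxa⟩
    · exact ⟨_, Finset.mem_insert_self _ _, List.mem_singleton_self _⟩
  · rcases Finset.mem_insert.mp ha with rfl | ha
    · rw [List.mem_singleton.mp ht]
      exact id
    · exact hq.2.2 a ha t ht

lemma CQ.constShift_detachFree : (q.detachFree j z Z).constShift = q.constShift := by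
  simp [CQ.constShift_eq, CQ.detachFree, Atom.maxConst]

lemma CQ.canonConst_detachFree : (q.detachFree j z Z).canonConst = q.canonConst :=
  funext fun v => by rw [CQ.canonConst, CQ.canonConst, CQ.constShift_detachFree]

lemma CQ.canonDB_subset_detachFree : q.canonDB ⊆ (q.detachFree j z Z).canonDB := by
  rintro _ ⟨b, hb, rfl⟩
  exact ⟨b, Finset.mem_insert_of_mem hb, by simp only [CQ.canonConst_detachFree]⟩

lemma CQ.canonTuple_detachFree :
    (q.detachFree j z Z).canonTuple = q.canonTuple.set j (q.canonConst z) := by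
  rw [CQ.canonTuple, CQ.canonConst_detachFree, CQ.detachFree, List.map_set, CQ.canonTuple]

lemma CQ.exists_null_mem_eval_detachFree (hq : ∀ a ∈ q.atoms, ∀ t ∈ a.args, ¬ t.isNull)
    (hj : j < q.free.length) (hz : z ∉ varsOf q.atoms) :
    ∃ t ∈ (q.detachFree j z Z).eval (nullModel Z), Tm.null 0 ∈ t := by
  classical
  let g : ℕ → Tm := fun v => if v = z then Tm.null 0 else Tm.const 0
  have hg : ∀ v, ¬ (g v).isVar := fun v => by by_cases hv : v = z <;> simp [g, hv, Tm.isVar]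
  refine ⟨_, ⟨g, ⟨hg, fun a ha => (map_assign_mem_nullModel_iff hg).mpr fun hnull => ?_⟩, rfl⟩,
    List.mem_map.mpr ⟨z, List.mem_set hj z, by simp [g]⟩⟩
  rcases Finset.mem_insert.mp ha with rfl | ha
  · rfl
  rcases Atom.mem_map_assign.mp hnull with ⟨hn, -⟩ | ⟨v, hva, hv⟩
  · exact absurd trivial (hq a ha _ hn)
  · have hvz : v = z := by
      by_contra hvz
      simp [g, hvz] at hv
    exact absurd ⟨a, ha, hvz ▸ hva⟩ hz

end detachFree

lemma CQ.mem_eval_canonDB_detachFree {qa p : CQ} (hqa : qa.free.Nodup) {h : ℕ → Tm}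
    (hhom : p.homOf h qa.canonDB) (htup : qa.canonTuple = p.free.map h) {j : ℕ}
    (hj : j < p.free.length) (hfree : p.free[j] ∉ varsOf p.atoms) (z Z : ℕ) :
    (qa.detachFree j z Z).canonTuple ∈ p.eval (qa.detachFree j z Z).canonDB := by
  have hpnd : p.free.Nodup := by
    have := hqa.map qa.canonConst_injective
    rw [← CQ.canonTuple, htup] at this
    exact this.of_map h
  refine ⟨Function.update h p.free[j] (qa.canonConst z), ⟨fun v => ?_, fun a ha => ?_⟩, ?_⟩
  · rcases eq_or_ne v p.free[j] with rfl | hv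
    · simp [CQ.canonConst, Tm.isVar]
    · simpa [hv] using hhom.1 v
  · rw [Atom.map_assign_congr (h₂ := h) fun v hv =>
      Function.update_of_ne (fun e : v = p.free[j] => hfree ⟨a, ha, e ▸ hv⟩) _ _]
    exact CQ.canonDB_subset_detachFree (hhom.2 a ha)
  · rw [hpnd.map_update, if_pos (List.getElem_mem hj), hpnd.idxOf_getElem, ← htup,
      CQ.canonTuple_detachFree]

/-- If a free variable of `p` occurred in no atom of `p`, then `p` would still fire after the
corresponding free variable of `qa` is detached into a fresh atom `Z(z)`; that query would then be
contained in `q`, but `nullModel Z` separates the two. -/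
theorem free_mem_varsOf_of_mem_eval_canonDB {S : Finset TGD} (hS : ∀ τ ∈ S, τ.wf) {q : CQ}
    (hq : ∀ x ∈ q.free, x ∈ varsOf q.atoms) {Q : List CQ} (hQ : IsUCQRewriting S q Q)
    {qa p : CQ} (hqa : qa.wf) (hp : p ∈ Q) (hfire : qa.canonTuple ∈ p.eval qa.canonDB) :
    ∀ y ∈ p.free, y ∈ varsOf p.atoms := by
  obtain ⟨h, hhom, htup⟩ := hfire
  intro y hy
  by_contra hy'
  obtain ⟨j, hj, rfl⟩ := List.getElem_of_mem hy
  have hjqa : j < qa.free.length := by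
    have := congrArg List.length htup
    simp only [CQ.canonTuple, List.length_map] at this
    omega
  obtain ⟨z, hz⟩ := (varsOf_finite qa.atoms).exists_notMem
  obtain ⟨Z, hZ⟩ := Infinite.exists_notMem_finset
    (q.atoms.image Atom.rel ∪ S.biUnion fun τ => (τ.body ∪ τ.head).image Atom.rel)
  have hcont := (hQ _ (CQ.detachFree_wf hqa hz)).mpr
    ⟨p, hp, CQ.mem_eval_canonDB_detachFree hqa.1 hhom htup hj hy' z Z⟩
  obtain ⟨t, ht, hnull⟩ := CQ.exists_null_mem_eval_detachFree hqa.2.2 hjqa hz (Z := Z)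
  refine null_notMem_of_mem_eval_nullModel hq (fun a ha e => hZ ?_)
    (hcont _ (isInstance_nullModel Z) (satTGDs_nullModel hS fun τ hτ a ha e => hZ ?_) ht) hnull
  · exact Finset.mem_union_left _ (Finset.mem_image.mpr ⟨a, ha, e⟩)
  · exact Finset.mem_union_right _
      (Finset.mem_biUnion.mpr ⟨τ, hτ, Finset.mem_image.mpr ⟨a, ha, e⟩⟩)

theorem statement11_general
    (S : Finset TGD) (hSwf : ∀ τ ∈ S, τ.wf)
    (q : CQ) (hq : q.wf)
    (Q : List CQ) (hQ : IsUCQRewriting S q Q)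
    (H : ℕ) (hH : ∀ p ∈ Q, p.atoms.card ≤ H)
    (hsa : SemAcyclic S q) :
    ∃ q' : CQ, q'.wf ∧ q'.Acyclic ∧ q'.free.length = q.free.length ∧
      q'.atoms.card ≤ 2 * H ∧ EquivUnder S q q' := by
  obtain ⟨qa, hqa, hqa_acyclic, hqa_len, hq_qa, hqa_q⟩ := hsa
  obtain ⟨p, hp, hfire⟩ := (hQ qa hqa).mp hqa_q
  have hpfree := free_mem_varsOf_of_mem_eval_canonDB hSwf hq.2.1 hQ hqa hp hfire
  obtain ⟨s, hs, hcard, hs_acyclic, hs_fire⟩ := exists_acyclic_subquery hqa hqa_acyclic hpfree hfire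
  have hs_wf : (CQ.mk qa.free s).wf :=
    CQ.wf_of_mem_eval_canonDB hqa.1 (fun a ha => hqa.2.2 a (hs ha)) hpfree hs_fire
  refine ⟨CQ.mk qa.free s, hs_wf, hs_acyclic, hqa_len, hcard.trans (by linarith [hH p hp]),
    fun I hI hIS => (hq_qa I hI hIS).trans (CQ.eval_subset_eval_mk hs I),
    (hQ _ hs_wf).mpr ⟨p, hp, hs_fire⟩⟩

/-- Let `C` be a UCQ rewritable class of sets of tgds, `S ∈ C` a
finite set of tgds and `q` a CQ. If `q` is semantically acyclic under `S`, then
there exists an acyclic CQ `q'` with at most `2·f_C(q,S)` atoms such that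
`q ≡_S q'` — where `f_C(q,S)` is any bound `H` on the height (the maximal number of
atoms of a disjunct) of a UCQ rewriting of `q` and `S`. -/
theorem statement11 (C : Set (Finset TGD)) (hC : UCQRewritable C)
    (S : Finset TGD) (hSC : S ∈ C) (hSwf : ∀ τ ∈ S, τ.wf)
    (q : CQ) (hq : q.wf)
    (Q : List CQ) (hQ : IsUCQRewriting S q Q)
    (H : ℕ) (hH : ∀ p ∈ Q, p.atoms.card ≤ H)
    (hsa : SemAcyclic S q) :
    ∃ q' : CQ, q'.wf ∧ q'.Acyclic ∧ q'.free.length = q.free.length ∧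
      q'.atoms.card ≤ 2 * H ∧ EquivUnder S q q' :=
  statement11_general S hSwf q hq Q hQ H hH hsa

end SemAcPaper
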